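/- If G is a k-regular finite simple graph of order n with k ≥ 1, then Ψ⁺_g(G) ≥ n/2 and Ψ⁻_g(G) ≥ n/2; equivalently, 2·Ψ⁺_g(G) ≥ n and 2·Ψ⁻_g(G) ≥ n. -/

import Mathlib

/-!
A play ends exactly when the chosen set `S` is a maximal enclaveless set, i.e. when `Sᶜ` is a
minimal dominating set, so both game numbers are sizes of such sets. In a `k`-regular graph
with `k ≥ 1` a minimal dominating set `D` is no larger than its complement: the vertices of `D`
with no neighbour in `D` have, by double counting, at least as many neighbours outside `D`;
every other vertex of `D` has a private neighbour outside `D`, which is adjacent to none of the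
former vertices, and distinct vertices have distinct private neighbours.
-/

namespace EnclavelessGame

variable {V : Type*} [Fintype V] [DecidableEq V]

/-- `v` is an enclave of `S` if `v ∈ S` and its closed neighborhood `N[v]` is contained in `S`. -/
def IsEnclave (G : SimpleGraph V) (S : Finset V) (v : V) : Prop :=
  v ∈ S ∧ ∀ u, G.Adj v u → u ∈ S

/-- `S` is enclaveless if it contains no enclave. -/
def IsEnclaveless (G : SimpleGraph V) (S : Finset V) : Prop :=
  ∀ v, ¬ IsEnclave G S v

instance (G : SimpleGraph V) [DecidableRel G.Adj] (S : Finset V) :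
    Decidable (IsEnclaveless G S) := by
  unfold IsEnclaveless IsEnclave
  infer_instance

/-- `D` is a dominating set: every vertex lies in the closed neighborhood
of some vertex of `D`. -/
def IsDominating (G : SimpleGraph V) (D : Finset V) : Prop :=
  ∀ v, ∃ u ∈ D, u = v ∨ G.Adj u v

/-- `D` is a minimal dominating set (minimal with respect to set inclusion). -/
def IsMinimalDominating (G : SimpleGraph V) (D : Finset V) : Prop :=
  IsDominating G D ∧ ∀ D' ⊆ D, IsDominating G D' → D' = D

/-- `S` is a maximal enclaveless set (maximal with respect to set inclusion). -/
def IsMaximalEnclaveless (G : SimpleGraph V) (S : Finset V) : Prop :=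
  IsEnclaveless G S ∧ ∀ T, S ⊆ T → IsEnclaveless G T → T = S

/-- The domination number `γ(G)`: minimum cardinality of a dominating set. -/
noncomputable def domNum (G : SimpleGraph V) : ℕ :=
  sInf {k | ∃ D : Finset V, IsDominating G D ∧ D.card = k}

/-- The upper domination number `Γ(G)`: maximum cardinality of a minimal dominating set. -/
noncomputable def upperDomNum (G : SimpleGraph V) : ℕ :=
  sSup {k | ∃ D : Finset V, IsMinimalDominating G D ∧ D.card = k}

/-- The enclaveless number `Ψ(G)`: maximum cardinality of an enclaveless set. -/
noncomputable def enclavelessNum (G : SimpleGraph V) : ℕ :=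
  sSup {k | ∃ S : Finset V, IsEnclaveless G S ∧ S.card = k}

/-- The lower enclaveless number `ψ(G)`: minimum cardinality of a maximal enclaveless set. -/
noncomputable def lowerEnclavelessNum (G : SimpleGraph V) : ℕ :=
  sInf {k | ∃ S : Finset V, IsMaximalEnclaveless G S ∧ S.card = k}

/-- The set of playable vertices given the set `S` of already chosen vertices:
vertices `v ∉ S` such that `S ∪ {v}` is enclaveless. -/
def playableSet (G : SimpleGraph V) [DecidableRel G.Adj] (S : Finset V) : Finset V :=
  Finset.univ.filter (fun v => v ∉ S ∧ IsEnclaveless G (insert v S))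

/-- The value of the competition-enclaveless game from position `S`: `maxTurn = true`
means it is Maximizer's turn (this computes `MaxVal S`), and `maxTurn = false` means it
is Minimizer's turn (this computes `MinVal S`). If no vertex is playable the value is
`|S|`; otherwise it is the max (resp. min) over playable `v` of the value of
`S ∪ {v}` with the turn switched. -/
def gameVal (G : SimpleGraph V) [DecidableRel G.Adj] (maxTurn : Bool) (S : Finset V) : ℕ :=
  if h : (playableSet G S).Nonempty then
    if maxTurn then
      (playableSet G S).attach.sup' (by simpa using h)
        (fun v => gameVal G false (insert v.1 S))
    else
      (playableSet G S).attach.inf' (by simpa using h)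
        (fun v => gameVal G true (insert v.1 S))
  else S.card
termination_by Sᶜ.card
decreasing_by
  all_goals
    have hv := v.2
    simp only [playableSet, Finset.mem_filter] at hv
    rw [Finset.compl_insert]
    exact Finset.card_erase_lt_of_mem (Finset.mem_compl.mpr hv.2.1)

/-- The Maximizer-start enclaveless game number `Ψ⁺_g(G) = MaxVal ∅`. -/
def maxStartGameNum (G : SimpleGraph V) [DecidableRel G.Adj] : ℕ := gameVal G true ∅

/-- The Minimizer-start enclaveless game number `Ψ⁻_g(G) = MinVal ∅`. -/
def minStartGameNum (G : SimpleGraph V) [DecidableRel G.Adj] : ℕ := gameVal G false ∅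

end EnclavelessGame

theorem SimpleGraph.IsRegularOfDegree.card_le_card_biUnion_neighborFinset {V : Type*}
    [Fintype V] [DecidableEq V] {G : SimpleGraph V} [DecidableRel G.Adj] {k : ℕ}
    (hreg : G.IsRegularOfDegree k) (hk : 1 ≤ k) (A : Finset V) :
    A.card ≤ (A.biUnion (G.neighborFinset ·)).card := by
  have hdouble := Finset.card_mul_le_card_mul G.Adj (s := A)
    (t := A.biUnion (G.neighborFinset ·)) (m := k) (n := k) (fun a ha => ?_) (fun b _ => ?_)
  · exact Nat.le_of_mul_le_mul_right hdouble hk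
  · rw [← hreg a]
    refine Finset.card_le_card fun u hu => ?_
    rw [SimpleGraph.mem_neighborFinset] at hu
    exact Finset.mem_filter.mpr
      ⟨Finset.mem_biUnion.mpr ⟨a, ha, (G.mem_neighborFinset a u).mpr hu⟩, hu⟩
  · rw [← hreg b]
    exact Finset.card_le_card fun a ha =>
      (G.mem_neighborFinset b a).mpr (Finset.mem_filter.mp ha).2.symm

namespace EnclavelessGame

variable {V : Type*} {G : SimpleGraph V}

theorem IsEnclaveless.mono {S T : Finset V} (hT : IsEnclaveless G T)
    (hST : S ⊆ T) : IsEnclaveless G S :=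
  fun v hv => hT v ⟨hST hv.1, fun u hu => hST (hv.2 u hu)⟩

variable (G) in
theorem isEnclaveless_empty : IsEnclaveless G ∅ :=
  fun v hv => Finset.notMem_empty v hv.1

theorem isDominating_compl_iff [Fintype V] [DecidableEq V] {S : Finset V} :
    IsDominating G Sᶜ ↔ IsEnclaveless G S := by
  simp only [IsDominating, IsEnclaveless, IsEnclave, Finset.mem_compl, not_and, not_forall]
  refine ⟨fun h v hv => ?_, fun h v => ?_⟩
  · obtain ⟨u, hu, rfl | huv⟩ := h v
    · exact absurd hv hu
    · exact ⟨u, huv.symm, hu⟩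
  · by_cases hv : v ∈ S
    · obtain ⟨u, huv, hu⟩ := h v hv
      exact ⟨u, hu, Or.inr huv.symm⟩
    · exact ⟨v, hv, Or.inl rfl⟩

theorem IsMaximalEnclaveless.isMinimalDominating_compl [Fintype V] [DecidableEq V]
    {S : Finset V} (hS : IsMaximalEnclaveless G S) : IsMinimalDominating G Sᶜ := by
  refine ⟨isDominating_compl_iff.mpr hS.1, fun D hD hdom => ?_⟩
  rw [← compl_compl D, isDominating_compl_iff] at hdom
  rw [← hS.2 Dᶜ (Finset.subset_compl_comm.mp hD) hdom, compl_compl]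

theorem IsMinimalDominating.exists_private_neighbor [DecidableEq V] {D : Finset V}
    (hD : IsMinimalDominating G D) {v : V} (hv : v ∈ D) :
    (∀ u, G.Adj v u → u ∉ D) ∨ ∃ w ∉ D, G.Adj v w ∧ ∀ u ∈ D, G.Adj u w → u = v := by
  have hnot : ¬ IsDominating G (D.erase v) := fun h =>
    Finset.erase_ne_self.mpr hv (hD.2 _ (D.erase_subset v) h)
  simp only [IsDominating, not_forall, not_exists, not_and, Finset.mem_erase] at hnot
  obtain ⟨w, hw⟩ := hnot
  obtain ⟨u, hu, huw⟩ := hD.1 w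
  obtain rfl : u = v := by_contra fun h => hw u ⟨h, hu⟩ huw
  rcases huw with rfl | hadj
  · exact Or.inl fun x hadj hx => hw x ⟨(G.ne_of_adj hadj).symm, hx⟩ (Or.inr hadj.symm)
  · exact Or.inr ⟨w, fun hwD => hw w ⟨(G.ne_of_adj hadj).symm, hwD⟩ (Or.inl rfl), hadj,
      fun x hx hxw => by_contra fun h => hw x ⟨h, hx⟩ (Or.inr hxw)⟩

theorem IsMinimalDominating.card_le_card_compl [Fintype V] [DecidableEq V] [DecidableRel G.Adj]
    {k : ℕ} (hreg : G.IsRegularOfDegree k) (hk : 1 ≤ k) {D : Finset V}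
    (hD : IsMinimalDominating G D) : D.card ≤ Dᶜ.card := by
  set A := D.filter fun v => ∀ u, G.Adj v u → u ∉ D
  set B := D \ A
  set T := A.biUnion (G.neighborFinset ·)
  have hTD : T ⊆ Dᶜ := by
    intro u hu
    obtain ⟨a, ha, hau⟩ := Finset.mem_biUnion.mp hu
    exact Finset.mem_compl.mpr
      ((Finset.mem_filter.mp ha).2 u ((G.mem_neighborFinset a u).mp hau))
  have hprivate : ∀ v ∈ B, ∃ w ∉ D, G.Adj v w ∧ ∀ u ∈ D, G.Adj u w → u = v := by
    intro v hv
    obtain ⟨hvD, hvA⟩ := Finset.mem_sdiff.mp hv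
    exact (hD.exists_private_neighbor hvD).resolve_left fun h =>
      hvA (Finset.mem_filter.mpr ⟨hvD, h⟩)
  choose! f hfD hfadj hfpriv using hprivate
  have hf_mem : ∀ v ∈ B, f v ∈ Dᶜ \ T := by
    intro v hv
    refine Finset.mem_sdiff.mpr ⟨Finset.mem_compl.mpr (hfD v hv), fun hfT => ?_⟩
    obtain ⟨a, ha, hadj⟩ := Finset.mem_biUnion.mp hfT
    obtain rfl := hfpriv v hv a (Finset.mem_filter.mp ha).1 ((G.mem_neighborFinset a _).mp hadj)
    exact (Finset.mem_sdiff.mp hv).2 ha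
  have hf_inj : Set.InjOn f B := fun v hv v' hv' hff =>
    (hfpriv v hv v' (Finset.mem_sdiff.mp hv').1 (hff ▸ hfadj v' hv')).symm
  calc D.card = B.card + A.card :=
        (Finset.card_sdiff_add_card_eq_card (Finset.filter_subset _ D)).symm
    _ ≤ (Dᶜ \ T).card + T.card :=
        add_le_add (Finset.card_le_card_of_injOn f hf_mem hf_inj)
          (hreg.card_le_card_biUnion_neighborFinset hk A)
    _ = Dᶜ.card := Finset.card_sdiff_add_card_eq_card hTD

theorem IsMaximalEnclaveless.card_le_two_mul_card [Fintype V] [DecidableEq V]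
    [DecidableRel G.Adj] {k : ℕ} (hreg : G.IsRegularOfDegree k) (hk : 1 ≤ k)
    {S : Finset V} (hS : IsMaximalEnclaveless G S) : Fintype.card V ≤ 2 * S.card := by
  have hcompl := hS.isMinimalDominating_compl.card_le_card_compl hreg hk
  rw [compl_compl] at hcompl
  have hsum := Finset.card_add_card_compl S
  omega

section Game

variable [Fintype V] [DecidableEq V] [DecidableRel G.Adj]

theorem isMaximalEnclaveless_of_not_nonempty_playableSet {S : Finset V}
    (hS : IsEnclaveless G S) (hend : ¬ (playableSet G S).Nonempty) : IsMaximalEnclaveless G S := by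
  refine ⟨hS, fun T hST hT => by_contra fun hne => ?_⟩
  obtain ⟨v, hvT, hvS⟩ := Finset.exists_of_ssubset (hST.ssubset_of_ne (Ne.symm hne))
  exact hend ⟨v, Finset.mem_filter.mpr
    ⟨Finset.mem_univ v, hvS, hT.mono (Finset.insert_subset hvT hST)⟩⟩

theorem exists_gameVal_eq_gameVal_insert (b : Bool) {S : Finset V}
    (h : (playableSet G S).Nonempty) :
    ∃ v ∈ playableSet G S, gameVal G b S = gameVal G (!b) (insert v S) := by
  rw [gameVal, dif_pos h]
  cases b
  · obtain ⟨v, -, hv⟩ := Finset.exists_mem_eq_inf' (Finset.attach_nonempty_iff.mpr h)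
      fun v : playableSet G S => gameVal G true (insert v.1 S)
    exact ⟨v.1, v.2, hv⟩
  · obtain ⟨v, -, hv⟩ := Finset.exists_mem_eq_sup' (Finset.attach_nonempty_iff.mpr h)
      fun v : playableSet G S => gameVal G false (insert v.1 S)
    exact ⟨v.1, v.2, hv⟩

theorem exists_isMaximalEnclaveless_gameVal_eq (b : Bool) {S : Finset V}
    (hS : IsEnclaveless G S) : ∃ T, IsMaximalEnclaveless G T ∧ gameVal G b S = T.card := by
  by_cases h : (playableSet G S).Nonempty
  · obtain ⟨v, hv, hval⟩ := exists_gameVal_eq_gameVal_insert b h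
    have hvS := (Finset.mem_filter.mp hv).2
    obtain ⟨T, hT, hvalT⟩ := exists_isMaximalEnclaveless_gameVal_eq (!b) hvS.2
    exact ⟨T, hT, hval.trans hvalT⟩
  · exact ⟨S, isMaximalEnclaveless_of_not_nonempty_playableSet hS h,
      by rw [gameVal, dif_neg h]⟩
termination_by Sᶜ.card
decreasing_by
  exact Finset.card_lt_card (Finset.compl_ssubset_compl.mpr (Finset.ssubset_insert hvS.1))

end Game

/-- If `G` is a `k`-regular finite simple graph of order `n` with `k ≥ 1`, then
`Ψ⁺_g(G) ≥ n/2` and `Ψ⁻_g(G) ≥ n/2`, i.e. `2·Ψ⁺_g(G) ≥ n` and `2·Ψ⁻_g(G) ≥ n`. -/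
theorem regular_gameNums_ge {V : Type*} [Fintype V] [DecidableEq V]
    (G : SimpleGraph V) [DecidableRel G.Adj] (k : ℕ) (hk : 1 ≤ k)
    (hreg : G.IsRegularOfDegree k) :
    Fintype.card V ≤ 2 * maxStartGameNum G ∧ Fintype.card V ≤ 2 * minStartGameNum G := by
  have hbound (b : Bool) : Fintype.card V ≤ 2 * gameVal G b ∅ := by
    obtain ⟨T, hT, hval⟩ := exists_isMaximalEnclaveless_gameVal_eq b (isEnclaveless_empty G)
    exact hval ▸ hT.card_le_two_mul_card hreg hk
  exact ⟨hbound true, hbound false⟩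

end EnclavelessGame
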